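/- arXiv:2007.05438 — 2 statements merged into one kernel-verified Lean document; each statement's English description precedes it below -/
import Mathlib

section
/- Let W be a random variable with values in [0,1] such that q_0 := P(W = 1) > 0, let m ≥ 1, suppose E[W] > 0, and set θ = 1 + E[W]/m. Define p(k) = E[((θ−1)/(θ−1+W))·(W/(θ−1+W))^k] for k ∈ ℕ_0. Then θ^k · p(k) → q_0 (1 − θ^{-1}) as k → ∞. -/
open MeasureTheory ProbabilityTheory Filter Topology

/-!
Multiplying by `θ ^ k` turns the integrand into `(θ-1)/(θ-1+W) · (θW/(θ-1+W))^k`. Since `θ > 1`,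
the ratio `θx/(θ-1+x)` lies in `[0,1]` for `x ∈ [0,1]` and equals `1` only at `x = 1`, so the
integrands are bounded by `1` and converge to `(1 - θ⁻¹) · 1{W = 1}`; dominated convergence
gives the limit `P(W = 1) (1 - θ⁻¹)`.
-/

noncomputable def degreeKernel (θ x : ℝ) (k : ℕ) : ℝ :=
  (θ - 1) / (θ - 1 + x) * (x / (θ - 1 + x)) ^ k

lemma pow_mul_degreeKernel (θ x : ℝ) (k : ℕ) :
    θ ^ k * degreeKernel θ x k = (θ - 1) / (θ - 1 + x) * (θ * x / (θ - 1 + x)) ^ k := by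
  rw [degreeKernel, mul_div_assoc θ, mul_pow]
  ring

section

variable {θ x : ℝ} (hθ : 1 < θ) (hx0 : 0 ≤ x)
include hθ hx0

lemma mul_div_sub_one_add_le_one (hx1 : x ≤ 1) : θ * x / (θ - 1 + x) ≤ 1 := by
  rw [div_le_one (by linarith)]
  nlinarith

lemma mul_div_sub_one_add_lt_one (hx1 : x < 1) : θ * x / (θ - 1 + x) < 1 := by
  rw [div_lt_one (by linarith)]
  nlinarith

lemma pow_mul_degreeKernel_nonneg (k : ℕ) : 0 ≤ θ ^ k * degreeKernel θ x k := by
  have : 0 < θ - 1 := by linarith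
  rw [pow_mul_degreeKernel]
  positivity

lemma pow_mul_degreeKernel_le_one (hx1 : x ≤ 1) (k : ℕ) : θ ^ k * degreeKernel θ x k ≤ 1 := by
  have hd : 0 < θ - 1 + x := by linarith
  rw [pow_mul_degreeKernel]
  exact mul_le_one₀ ((div_le_one hd).2 (by linarith)) (by positivity)
    (pow_le_one₀ (by positivity) (mul_div_sub_one_add_le_one hθ hx0 hx1))

lemma tendsto_pow_mul_degreeKernel (hx1 : x ≤ 1) :
    Tendsto (fun k => θ ^ k * degreeKernel θ x k) atTop
      (𝓝 (({1} : Set ℝ).indicator (fun _ => 1 - θ⁻¹) x)) := by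
  simp_rw [pow_mul_degreeKernel]
  rcases hx1.eq_or_lt with rfl | hlt
  · have hθ0 : θ ≠ 0 := by positivity
    have hden : θ - 1 + 1 = θ := by ring
    rw [Set.indicator_of_mem (Set.mem_singleton (1 : ℝ))]
    simp only [hden, mul_one, div_self hθ0, one_pow, sub_div, inv_eq_one_div]
    exact tendsto_const_nhds
  · have hd : 0 < θ - 1 + x := by linarith
    rw [Set.indicator_of_notMem (Set.mem_singleton_iff.not.2 hlt.ne),
      ← mul_zero ((θ - 1) / (θ - 1 + x))]
    exact (tendsto_pow_atTop_nhds_zero_of_lt_one (by positivity)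
      (mul_div_sub_one_add_lt_one hθ hx0 hlt)).const_mul _

end

lemma tendsto_pow_mul_integral_degreeKernel {Ω : Type*} [MeasurableSpace Ω] (μ : Measure Ω)
    [IsFiniteMeasure μ] {W : Ω → ℝ} (hW : Measurable W) (hrange : ∀ᵐ ω ∂μ, W ω ∈ Set.Icc 0 1)
    {θ : ℝ} (hθ : 1 < θ) :
    Tendsto (fun k => θ ^ k * ∫ ω, degreeKernel θ (W ω) k ∂μ) atTop
      (𝓝 (μ.real {ω | W ω = 1} * (1 - θ⁻¹))) := by
  have hlim : ∫ ω, ({1} : Set ℝ).indicator (fun _ => 1 - θ⁻¹) (W ω) ∂μ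
      = μ.real {ω | W ω = 1} * (1 - θ⁻¹) := by
    change ∫ ω, {ω | W ω = 1}.indicator (fun _ => 1 - θ⁻¹) ω ∂μ = _
    have hs : MeasurableSet {ω | W ω = 1} := hW (measurableSet_singleton 1)
    rw [integral_indicator_const _ hs, smul_eq_mul]
  simp_rw [← integral_const_mul, ← hlim]
  refine tendsto_integral_of_dominated_convergence (fun _ => 1)
    (fun k => by unfold degreeKernel; fun_prop) (integrable_const 1) (fun k => ?_) ?_
  · filter_upwards [hrange] with ω ⟨h0, h1⟩
    rw [Real.norm_of_nonneg (pow_mul_degreeKernel_nonneg hθ h0 k)]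
    exact pow_mul_degreeKernel_le_one hθ h0 h1 k
  · filter_upwards [hrange] with ω ⟨h0, h1⟩
    exact tendsto_pow_mul_degreeKernel hθ h0 h1

theorem stmt5_general {Ω : Type*} [MeasureSpace Ω] [IsProbabilityMeasure (ℙ : Measure Ω)]
    (W : Ω → ℝ) (hW : Measurable W) (hrange : ∀ᵐ ω ∂ℙ, W ω ∈ Set.Icc (0:ℝ) 1)
    (q₀ : ℝ) (hq₀ : q₀ = (ℙ {ω | W ω = 1}).toReal)
    (m : ℕ) (hm : 1 ≤ m)
    (hmean : 0 < ∫ ω, W ω ∂ℙ)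
    (θ : ℝ) (hθ : θ = 1 + (∫ ω, W ω ∂ℙ) / m)
    (p : ℕ → ℝ)
    (hp : ∀ k, p k = ∫ ω, ((θ - 1) / (θ - 1 + W ω)) * (W ω / (θ - 1 + W ω)) ^ k ∂ℙ) :
    Tendsto (fun k : ℕ => θ ^ k * p k) atTop (𝓝 (q₀ * (1 - θ⁻¹))) := by
  have hθ1 : 1 < θ := by
    have : (0 : ℝ) < m := by exact_mod_cast hm
    rw [hθ, lt_add_iff_pos_right]
    positivity
  have hpW : p = fun k => ∫ ω, degreeKernel θ (W ω) k ∂ℙ := funext hp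
  rw [hpW, hq₀]
  exact tendsto_pow_mul_integral_degreeKernel ℙ hW hrange hθ1

/-- For a `[0,1]`-valued weight `W` with an atom `q₀ = P(W = 1) > 0` at `1`, positive mean,
`θ = 1 + E[W]/m`, and `p(k) = E[((θ-1)/(θ-1+W)) (W/(θ-1+W))^k]`, one has
`θ^k p(k) → q₀ (1 - θ⁻¹)` as `k → ∞`. -/
theorem stmt5 {Ω : Type*} [MeasureSpace Ω] [IsProbabilityMeasure (ℙ : Measure Ω)]
    (W : Ω → ℝ) (hW : Measurable W) (hrange : ∀ᵐ ω ∂ℙ, W ω ∈ Set.Icc (0:ℝ) 1)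
    (q₀ : ℝ) (hq₀ : q₀ = (ℙ {ω | W ω = 1}).toReal) (hq₀pos : 0 < q₀)
    (m : ℕ) (hm : 1 ≤ m)
    (hmean : 0 < ∫ ω, W ω ∂ℙ)
    (θ : ℝ) (hθ : θ = 1 + (∫ ω, W ω ∂ℙ) / m)
    (p : ℕ → ℝ)
    (hp : ∀ k, p k = ∫ ω, ((θ - 1) / (θ - 1 + W ω)) * (W ω / (θ - 1 + W ω)) ^ k ∂ℙ) :
    Tendsto (fun k : ℕ => θ ^ k * p k) atTop (𝓝 (q₀ * (1 - θ⁻¹))) :=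
  stmt5_general W hW hrange q₀ hq₀ m hm hmean θ hθ p hp
end

section
/- Let α > 1 and let ν be the measure on (0,1) × (0,∞) given by ν(dt, df) = dt × (α−1)f^{−α} df. Then for every x > 0, ν({(t,f) : f·log(1/t) > x}) = Γ(α)·x^{−(α−1)}. Consequently, for a Poisson point process Π with intensity ν, P(max_{(t,f)∈Π} f·log(1/t) ≤ x) = exp(−Γ(α)x^{−(α−1)}), i.e. the maximum is Fréchet distributed with shape α−1 and scale Γ(α)^{1/(α−1)}. -/
/-! For fixed `t ∈ (0,1)` the slice `{f : x < f log(1/t)}` is a Pareto tail `(c, ∞)` with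
`c = x / log(1/t)`, of `ν`-mass `c^{-(α-1)} = x^{-(α-1)} (log(1/t))^{α-1}`. Integrating over `t`
and substituting `t = e^{-u}` turns `∫₀¹ (log(1/t))^{α-1} dt` into Euler's integral for `Γ(α)`. -/

open MeasureTheory Real Set

noncomputable abbrev paretoIntensity (α : ℝ) : Measure ℝ :=
  (volume.restrict (Ioi 0)).withDensity fun f => ENNReal.ofReal ((α - 1) * f ^ (-α))

lemma paretoIntensity_Ioi {α : ℝ} (hα : 1 < α) {c : ℝ} (hc : 0 < c) :
    paretoIntensity α (Ioi c) = ENNReal.ofReal (c ^ (-(α - 1))) := by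
  have hint : IntegrableOn (fun f : ℝ => (α - 1) * f ^ (-α)) (Ioi c) :=
    (integrableOn_Ioi_rpow_of_lt (by linarith) hc).const_mul (α - 1)
  have hnonneg : 0 ≤ᵐ[volume.restrict (Ioi c)] fun f : ℝ => (α - 1) * f ^ (-α) := by
    filter_upwards [ae_restrict_mem measurableSet_Ioi] with f hf
    exact mul_nonneg (by linarith) (rpow_nonneg (hc.trans hf).le _)
  rw [paretoIntensity, withDensity_apply _ measurableSet_Ioi,
    Measure.restrict_restrict measurableSet_Ioi, Ioi_inter_Ioi, sup_eq_left.mpr hc.le,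
    ← ofReal_integral_eq_lintegral_ofReal hint hnonneg, integral_const_mul,
    integral_Ioi_rpow_of_lt (by linarith) hc, show -α + 1 = -(α - 1) by ring]
  congr 1
  field_simp [(by linarith : α - 1 ≠ 0)]

lemma image_exp_neg_Ioi : (fun u : ℝ => exp (-u)) '' Ioi 0 = Ioo 0 1 := by
  ext y
  constructor
  · rintro ⟨u, hu, rfl⟩
    exact ⟨exp_pos _, exp_lt_one_iff.2 (neg_neg_iff_pos.2 hu)⟩
  · rintro ⟨h0, h1⟩
    exact ⟨-log y, neg_pos.2 (log_neg h0 h1), by simp [exp_log h0]⟩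

lemma lintegral_Ioo_neg_log_rpow {s : ℝ} (hs : 0 < s) :
    ∫⁻ t in Ioo 0 1, ENNReal.ofReal ((-log t) ^ (s - 1)) = ENNReal.ofReal (Gamma s) := by
  have hderiv : ∀ u ∈ Ioi (0 : ℝ),
      HasDerivWithinAt (fun u => exp (-u)) (-exp (-u)) (Ioi 0) u := fun u _ => by
    simpa [Function.comp_def] using
      ((hasDerivAt_exp (-u)).comp u (hasDerivAt_neg u)).hasDerivWithinAt
  have hnonneg : 0 ≤ᵐ[volume.restrict (Ioi 0)] fun u : ℝ => exp (-u) * u ^ (s - 1) := by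
    filter_upwards [ae_restrict_mem measurableSet_Ioi] with u hu
    exact mul_nonneg (exp_pos _).le (rpow_nonneg (le_of_lt hu) _)
  rw [← image_exp_neg_Ioi, lintegral_image_eq_lintegral_abs_deriv_mul measurableSet_Ioi hderiv
      (fun a _ b _ h => by simpa using h),
    Gamma_eq_integral hs, ofReal_integral_eq_lintegral_ofReal (GammaIntegral_convergent hs) hnonneg]
  refine setLIntegral_congr_fun measurableSet_Ioi fun u _ => ?_
  simp [ENNReal.ofReal_mul (exp_pos _).le]

lemma preimage_mk_setOf_lt_mul_log_inv {x t : ℝ} (ht : t ∈ Ioo 0 1) :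
    Prod.mk t ⁻¹' {q : ℝ × ℝ | x < q.2 * log (1 / q.1)} = Ioi (x / -log t) := by
  ext f
  simp only [mem_preimage, mem_ofPred_eq, mem_Ioi, one_div, log_inv]
  rw [div_lt_iff₀ (neg_pos.2 (log_neg ht.1 ht.2))]

theorem volume_Ioo_prod_paretoIntensity_setOf_lt_mul_log_inv {α x : ℝ} (hα : 1 < α)
    (hx : 0 < x) :
    ((volume.restrict (Ioo 0 1)).prod (paretoIntensity α))
        {q : ℝ × ℝ | x < q.2 * log (1 / q.1)} =
      ENNReal.ofReal (Gamma α * x ^ (-(α - 1))) := by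
  have hS : MeasurableSet {q : ℝ × ℝ | x < q.2 * log (1 / q.1)} :=
    measurableSet_lt measurable_const (by fun_prop)
  rw [Measure.prod_apply hS]
  calc _ = ∫⁻ t in Ioo 0 1,
        ENNReal.ofReal (x ^ (-(α - 1))) * ENNReal.ofReal ((-log t) ^ (α - 1)) := by
        refine setLIntegral_congr_fun measurableSet_Ioo fun t ht => ?_
        have hL : 0 < -log t := neg_pos.2 (log_neg ht.1 ht.2)
        rw [preimage_mk_setOf_lt_mul_log_inv ht, paretoIntensity_Ioi hα (div_pos hx hL),
          div_rpow hx.le hL.le, rpow_neg hL.le, div_inv_eq_mul,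
          ENNReal.ofReal_mul (rpow_nonneg hx.le _)]
    _ = _ := by
        rw [lintegral_const_mul' _ _ ENNReal.ofReal_ne_top,
          lintegral_Ioo_neg_log_rpow (by linarith),
          ← ENNReal.ofReal_mul (rpow_nonneg hx.le _), mul_comm]

/-- For `α > 1` and the measure `ν(dt, df) = dt × (α-1) f^{-α} df` on `(0,1) × (0,∞)`:
for every `x > 0`, `ν({(t,f) : f log(1/t) > x}) = Γ(α) x^{-(α-1)}`, and consequently
`exp(-ν({(t,f) : f log(1/t) > x})) = exp(-Γ(α) x^{-(α-1)})`, the Fréchet distribution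
function with shape `α-1` and scale `Γ(α)^{1/(α-1)}`. -/
theorem stmt17 (α : ℝ) (hα : 1 < α)
    (ν : Measure (ℝ × ℝ))
    (hν : ν = (volume.restrict (Set.Ioo (0:ℝ) 1)).prod
        ((volume.restrict (Set.Ioi (0:ℝ))).withDensity
          (fun f => ENNReal.ofReal ((α - 1) * f ^ (-α))))) :
    ∀ x : ℝ, 0 < x →
      ν {q : ℝ × ℝ | x < q.2 * Real.log (1 / q.1)} =
        ENNReal.ofReal (Real.Gamma α * x ^ (-(α - 1))) ∧
      Real.exp (-(ν {q : ℝ × ℝ | x < q.2 * Real.log (1 / q.1)}).toReal) =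
        Real.exp (-(Real.Gamma α * x ^ (-(α - 1)))) := by
  intro x hx
  have hmass : ν {q : ℝ × ℝ | x < q.2 * log (1 / q.1)} =
      ENNReal.ofReal (Gamma α * x ^ (-(α - 1))) :=
    hν ▸ volume_Ioo_prod_paretoIntensity_setOf_lt_mul_log_inv hα hx
  refine ⟨hmass, ?_⟩
  rw [hmass, ENNReal.toReal_ofReal
    (mul_nonneg (Gamma_pos_of_pos (by linarith)).le (rpow_nonneg hx.le _))]
end
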